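/- arXiv:2011.02521 — 2 statements merged into one kernel-verified Lean document; each statement's English description precedes it below -/
import Mathlib

section
/- Suppose nonnegative families (n_t, n_{tt}, ñ_{tt}) satisfy the product-form optimality conditions ñ_{tt}(x, o) = p(o|x) e^{−a_t(x)} e^{−b_t(o)} and n_{tt}(x, x') = p(x'|x) e^{−c_{t+1}(x')} e^{−d_t(x)} for real-valued dual variables a, b, c, d, together with the marginalization identities n_t(x)² = (Σ_{x'} n_{t-1,t-1}(x', x)) · (Σ_{x''} n_{tt}(x, x'')) for interior times t. Define α_t(x) = Σ_{x'} p(x|x') e^{−d_{t-1}(x')}, β_t(x) = Σ_{x'} p(x'|x) e^{−c_{t+1}(x')}, γ_t(x) = Σ_o p(o|x) e^{−b_t(o)}, ξ_t(o) = Σ_x p(o|x) e^{−a_t(x)}. Then e^{−a_t(x)} ∝ α_t(x) β_t(x) (proportionality in x), and consequently ξ_t(o) ∝ Σ_x p(o|x) α_t(x) β_t(x). -/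
open Finset Real

/-- key algebraic step in the proof of Theorem 2. Under the
product-form optimality conditions (factorizations of the pairwise marginals in
terms of exponentiated dual variables), the marginalization identity
`n_t(x)² = (Σ_{x'} n_{t-1,t-1}(x',x))·(Σ_{x''} n_{tt}(x,x''))`, and the
stationarity condition `n_t ∝ e^{−(a+c+d)/2}`, one has
`e^{−a_t(x)} ∝ α_t(x) β_t(x)` and hence
`ξ_t(o) ∝ Σ_x p(o|x) α_t(x) β_t(x)`. -/
theorem dual_a_propto_alpha_beta
    {X O : Type*} [Fintype X] [Fintype O] [Nonempty X] [Nonempty O]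
    (trans : X → X → ℝ) (emis : X → O → ℝ)
    (htrans : ∀ x x', 0 < trans x x') (hemis : ∀ x o, 0 < emis x o)
    -- dual variables (a,b for time t; c for times t and t+1; d for times t-1 and t)
    (a : X → ℝ) (b : O → ℝ) (cT cT1 : X → ℝ) (dprev d : X → ℝ)
    -- pairwise marginals and their product-form factorizations
    (nprev ncur : X → X → ℝ)
    (hnprev : ∀ x' x, nprev x' x = trans x' x * Real.exp (-(cT x)) * Real.exp (-(dprev x')))
    (hncur : ∀ x x'', ncur x x'' = trans x x'' * Real.exp (-(cT1 x'')) * Real.exp (-(d x)))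
    -- node marginal, positive, with marginalization identity
    (n : X → ℝ) (hnpos : ∀ x, 0 < n x)
    (hmarg : ∀ x, n x ^ 2 = (∑ x', nprev x' x) * (∑ x'', ncur x x''))
    -- stationarity: n ∝ e^{-(a+c+d)/2}
    (μ : ℝ) (hμ : 0 < μ)
    (hstat : ∀ x, n x = μ * Real.exp (-(a x + cT x + d x) / 2))
    -- messages
    (α β : X → ℝ) (ξ : O → ℝ)
    (hα : ∀ x, α x = ∑ x', trans x' x * Real.exp (-(dprev x')))
    (hβ : ∀ x, β x = ∑ x', trans x x' * Real.exp (-(cT1 x')))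
    (hξ : ∀ o, ξ o = ∑ x, emis x o * Real.exp (-(a x))) :
    (∃ lam : ℝ, 0 < lam ∧ ∀ x, Real.exp (-(a x)) = lam * (α x * β x)) ∧
    (∃ lam : ℝ, 0 < lam ∧ ∀ o, ξ o = lam * ∑ x, emis x o * α x * β x) := by
  have key : ∀ x, Real.exp (-(a x)) = μ⁻¹ ^ 2 * (α x * β x) := by
    intro x
    have h1 : (∑ x', nprev x' x) = Real.exp (-(cT x)) * α x := by
      rw [hα, Finset.mul_sum]
      exact Finset.sum_congr rfl fun x' _ => by rw [hnprev]; ring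
    have h2 : (∑ x'', ncur x x'') = Real.exp (-(d x)) * β x := by
      rw [hβ, Finset.mul_sum]
      exact Finset.sum_congr rfl fun x'' _ => by rw [hncur]; ring
    have h3 : n x ^ 2 = μ ^ 2 * (Real.exp (-(a x)) * Real.exp (-(cT x)) * Real.exp (-(d x))) := by
      rw [hstat, mul_pow, ← Real.exp_nat_mul]
      rw [← Real.exp_add, ← Real.exp_add]
      congr 2
      ring
    have h4 := hmarg x
    rw [h1, h2, h3] at h4
    have hc := Real.exp_pos (-(cT x))
    have hd := Real.exp_pos (-(d x))
    have hμ2 : (0:ℝ) < μ ^ 2 := by positivity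
    have h5 : (μ ^ 2 * Real.exp (-(a x))) * (Real.exp (-(cT x)) * Real.exp (-(d x)))
        = (α x * β x) * (Real.exp (-(cT x)) * Real.exp (-(d x))) := by
      linear_combination h4
    have h6 := mul_right_cancel₀ (by positivity : (Real.exp (-(cT x)) * Real.exp (-(d x))) ≠ 0) h5
    field_simp
    linear_combination h6
  refine ⟨⟨μ⁻¹ ^ 2, by positivity, key⟩, ⟨μ⁻¹ ^ 2, by positivity, fun o => ?_⟩⟩
  rw [hξ, Finset.mul_sum]
  exact Finset.sum_congr rfl fun x _ => by rw [key]; ring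
end

section
/- Under the same product-form optimality setup, using n_t(x)² = (Σ_{x''} n_{tt}(x, x'')) · (Σ_o ñ_{tt}(x, o)), one has e^{−c_t(x)} ∝ β_t(x) γ_t(x), and using n_t(x)² = (Σ_{x'} n_{t-1,t-1}(x', x)) · (Σ_o ñ_{tt}(x, o)), one has e^{−d_t(x)} ∝ α_t(x) γ_t(x). Combining with e^{−a_t(x)} ∝ α_t(x) β_t(x) and n_t(x) ∝ e^{−(a_t(x)+c_t(x)+d_t(x))/2}, it follows that n_t(x) ∝ α_t(x) β_t(x) γ_t(x). -/
open Finset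

/-- Under the same product-form optimality setup, the
marginalization identities involving the state-observation marginal give
`e^{−c_t} ∝ β_t γ_t` and `e^{−d_t} ∝ α_t γ_t`; combining with
`e^{−a_t} ∝ α_t β_t` and `n_t ∝ e^{−(a+c+d)/2}` yields
`n_t ∝ α_t β_t γ_t`. -/
theorem marginals_propto_alpha_beta_gamma
    {X O : Type*} [Fintype X] [Fintype O] [Nonempty X] [Nonempty O]
    (trans : X → X → ℝ) (emis : X → O → ℝ)
    (htrans : ∀ x x', 0 < trans x x') (hemis : ∀ x o, 0 < emis x o)
    (a : X → ℝ) (b : O → ℝ) (cT cT1 : X → ℝ) (dprev d : X → ℝ)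
    -- product-form factorizations of the pairwise marginals
    (nprev ncur : X → X → ℝ) (ntil : X → O → ℝ)
    (hnprev : ∀ x' x, nprev x' x = trans x' x * Real.exp (-(cT x)) * Real.exp (-(dprev x')))
    (hncur : ∀ x x'', ncur x x'' = trans x x'' * Real.exp (-(cT1 x'')) * Real.exp (-(d x)))
    (hntil : ∀ x o, ntil x o = emis x o * Real.exp (-(a x)) * Real.exp (-(b o)))
    -- node marginal, positive, with marginalization identities
    (n : X → ℝ) (hnpos : ∀ x, 0 < n x)
    (hmarg1 : ∀ x, n x ^ 2 = (∑ x'', ncur x x'') * (∑ o, ntil x o))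
    (hmarg2 : ∀ x, n x ^ 2 = (∑ x', nprev x' x) * (∑ o, ntil x o))
    -- stationarity: n ∝ e^{-(a+c+d)/2}
    (μ : ℝ) (hμ : 0 < μ)
    (hstat : ∀ x, n x = μ * Real.exp (-(a x + cT x + d x) / 2))
    -- messages
    (α β γ : X → ℝ)
    (hα : ∀ x, α x = ∑ x', trans x' x * Real.exp (-(dprev x')))
    (hβ : ∀ x, β x = ∑ x', trans x x' * Real.exp (-(cT1 x')))
    (hγ : ∀ x, γ x = ∑ o, emis x o * Real.exp (-(b o)))
    -- combining with e^{-a} ∝ α β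
    (lamA : ℝ) (hlamA : 0 < lamA)
    (ha : ∀ x, Real.exp (-(a x)) = lamA * (α x * β x)) :
    (∃ lam : ℝ, 0 < lam ∧ ∀ x, Real.exp (-(cT x)) = lam * (β x * γ x)) ∧
    (∃ lam : ℝ, 0 < lam ∧ ∀ x, Real.exp (-(d x)) = lam * (α x * γ x)) ∧
    (∃ lam : ℝ, 0 < lam ∧ ∀ x, n x = lam * (α x * β x * γ x)) := by
  have hαpos : ∀ x, 0 < α x := fun x => by
    rw [hα]; exact Finset.sum_pos (fun x' _ => mul_pos (htrans x' x) (Real.exp_pos _)) Finset.univ_nonempty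
  have hβpos : ∀ x, 0 < β x := fun x => by
    rw [hβ]; exact Finset.sum_pos (fun x' _ => mul_pos (htrans x x') (Real.exp_pos _)) Finset.univ_nonempty
  have hγpos : ∀ x, 0 < γ x := fun x => by
    rw [hγ]; exact Finset.sum_pos (fun o _ => mul_pos (hemis x o) (Real.exp_pos _)) Finset.univ_nonempty
  have hsumcur : ∀ x, (∑ x'', ncur x x'') = β x * Real.exp (-(d x)) := fun x => by
    rw [hβ, Finset.sum_mul]
    exact Finset.sum_congr rfl fun x'' _ => hncur x x''
  have hsumprev : ∀ x, (∑ x', nprev x' x) = α x * Real.exp (-(cT x)) := fun x => by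
    rw [hα, Finset.sum_mul]
    exact Finset.sum_congr rfl fun x' _ => by rw [hnprev]; ring
  have hsumtil : ∀ x, (∑ o, ntil x o) = γ x * Real.exp (-(a x)) := fun x => by
    rw [hγ, Finset.sum_mul]
    exact Finset.sum_congr rfl fun o _ => by rw [hntil]; ring
  have hn2 : ∀ x, n x ^ 2 = μ ^ 2 * (Real.exp (-(a x)) * Real.exp (-(cT x)) * Real.exp (-(d x))) := fun x => by
    rw [hstat, ← Real.exp_add, ← Real.exp_add, mul_pow, ← Real.exp_nat_mul]
    congr 1
    ring
  have hμ2 : (μ:ℝ) ^ 2 ≠ 0 := by positivity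
  have keyc : ∀ x, Real.exp (-(cT x)) * μ ^ 2 = β x * γ x := fun x => by
    have h1 := hmarg1 x
    rw [hsumcur, hsumtil, hn2 x] at h1
    have hk : Real.exp (-(a x)) * Real.exp (-(d x)) ≠ 0 :=
      ne_of_gt (mul_pos (Real.exp_pos _) (Real.exp_pos _))
    exact mul_right_cancel₀ hk (by linear_combination h1)
  have keyd : ∀ x, Real.exp (-(d x)) * μ ^ 2 = α x * γ x := fun x => by
    have h1 := hmarg2 x
    rw [hsumprev, hsumtil, hn2 x] at h1
    have hk : Real.exp (-(a x)) * Real.exp (-(cT x)) ≠ 0 :=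
      ne_of_gt (mul_pos (Real.exp_pos _) (Real.exp_pos _))
    exact mul_right_cancel₀ hk (by linear_combination h1)
  refine ⟨⟨1 / μ ^ 2, by positivity, fun x => ?_⟩, ⟨1 / μ ^ 2, by positivity, fun x => ?_⟩,
    ⟨Real.sqrt lamA / μ, by positivity, fun x => ?_⟩⟩
  · field_simp
    linarith [keyc x]
  · field_simp
    linarith [keyd x]
  · have hsqrt : Real.sqrt lamA ^ 2 = lamA := Real.sq_sqrt hlamA.le
    have hsq : (n x * μ) ^ 2 = (Real.sqrt lamA * (α x * β x * γ x)) ^ 2 := by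
      have := hn2 x
      have hax := ha x
      have hcx := keyc x
      have hdx := keyd x
      calc (n x * μ) ^ 2 = (n x ^ 2) * μ ^ 2 := by ring
        _ = Real.exp (-(a x)) * (Real.exp (-(cT x)) * μ ^ 2) * (Real.exp (-(d x)) * μ ^ 2) := by
            rw [this]; ring
        _ = lamA * (α x * β x) * (β x * γ x) * (α x * γ x) := by rw [hax, hcx, hdx]
        _ = (Real.sqrt lamA * (α x * β x * γ x)) ^ 2 := by rw [mul_pow, hsqrt]; ring
    have hp : 0 < n x * μ := mul_pos (hnpos x) hμ
    have hq : 0 < Real.sqrt lamA * (α x * β x * γ x) := by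
      have := hαpos x; have := hβpos x; have := hγpos x
      have : (0:ℝ) < Real.sqrt lamA := Real.sqrt_pos.mpr hlamA
      positivity
    have heq : n x * μ = Real.sqrt lamA * (α x * β x * γ x) := by
      apply le_antisymm
      · nlinarith [hsq, hp, hq]
      · nlinarith [hsq, hp, hq]
    field_simp
    linarith [heq]
end
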